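/- Fix an integer p ≥ 1, real parameters (β_q)_{q≥1} with only finitely many nonzero, h ∈ ℝ, and β_p' > β_p with δ = β_p' − β_p. Define Δ_N = N^{−1} ∫_{β_p}^{β_p'} E⟨(H_p(σ) − ⟨H_p(σ)⟩_x)²⟩_x dx. Then N^{−1} E⟨|H_p(σ) − ⟨H_p(σ)⟩_{β_p}|⟩_{β_p} ≤ N^{−1} E⟨|H_p(σ¹) − H_p(σ²)|⟩_{β_p} ≤ 2√(Δ_N/(Nδ)) + 8Δ_N. -/

import Mathlib

open MeasureTheory ProbabilityTheory Filter

noncomputable section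

/-- A spin configuration on `N` sites; `true ↦ +1`, `false ↦ -1`. -/
abbrev Config (N : ℕ) := Fin N → Bool

/-- The spin value of a site. -/
def spin (b : Bool) : ℝ := if b then 1 else -1

variable {Ω : Type*} [MeasurableSpace Ω]

/-- The `p`-spin Hamiltonian
`H_p(σ) = N^{-(p-1)/2} ∑_{i₁,…,i_p} g_{i₁,…,i_p} σ_{i₁}⋯σ_{i_p}`. -/
def Hp (N p : ℕ) (g : (Fin p → Fin N) → Ω → ℝ) (σ : Config N) (ω : Ω) : ℝ :=
  (N : ℝ) ^ (-(((p : ℝ) - 1) / 2)) *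
    ∑ i : Fin p → Fin N, g i ω * ∏ k, spin (σ (i k))

/-- The Boltzmann weight `exp(∑_q β_q H_q(σ) + h ∑_i σ_i)`. -/
def weight (N : ℕ) (β : ℕ → ℝ) (h : ℝ)
    (g : (q : ℕ) → (Fin q → Fin N) → Ω → ℝ) (σ : Config N) (ω : Ω) : ℝ :=
  Real.exp ((∑ᶠ q, β q * Hp N q (g q) σ ω) + h * ∑ i, spin (σ i))

/-- The partition function `Z_N`. -/
def Zpart (N : ℕ) (β : ℕ → ℝ) (h : ℝ)
    (g : (q : ℕ) → (Fin q → Fin N) → Ω → ℝ) (ω : Ω) : ℝ :=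
  ∑ σ : Config N, weight N β h g σ ω

/-- The Gibbs measure `G_N(σ)`. -/
def gibbs (N : ℕ) (β : ℕ → ℝ) (h : ℝ)
    (g : (q : ℕ) → (Fin q → Fin N) → Ω → ℝ) (σ : Config N) (ω : Ω) : ℝ :=
  weight N β h g σ ω / Zpart N β h g ω

/-- The Gibbs average `⟨f⟩` of a (possibly random) function of `n` replicas. -/
def gibbsAvg (N : ℕ) (β : ℕ → ℝ) (h : ℝ)
    (g : (q : ℕ) → (Fin q → Fin N) → Ω → ℝ) (n : ℕ)
    (f : (Fin n → Config N) → Ω → ℝ) (ω : Ω) : ℝ :=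
  ∑ σs : Fin n → Config N, f σs ω * ∏ l, gibbs N β h g (σs l) ω

/-- The overlap `R_{1,2}` of two configurations. -/
def overlapR (N : ℕ) (σ τ : Config N) : ℝ :=
  (N : ℝ)⁻¹ * ∑ i, spin (σ i) * spin (τ i)

/-- The random free energy `ψ_N = N⁻¹ log Z_N`. -/
def psiFE (N : ℕ) (β : ℕ → ℝ) (h : ℝ)
    (g : (q : ℕ) → (Fin q → Fin N) → Ω → ℝ) (ω : Ω) : ℝ :=
  (N : ℝ)⁻¹ * Real.log (Zpart N β h g ω)

/-- The disorder of the mixed model, for all `p`, is an i.i.d. standard Gaussian family. -/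
def IsGaussianDisorder (N : ℕ) (g : (q : ℕ) → (Fin q → Fin N) → Ω → ℝ)
    (μ : Measure Ω) : Prop :=
  (∀ q (i : Fin q → Fin N), Measurable (g q i)) ∧
  (∀ q (i : Fin q → Fin N), Measure.map (g q i) μ = gaussianReal 0 1) ∧
  iIndepFun
    (fun qi : Σ q : ℕ, (Fin q → Fin N) => g qi.1 qi.2) μ

end

/-!
Replacing `β_p` by `x` tilts a fixed Gibbs measure by `exp (x H_p)`, so that
`d/dx ⟨f⟩_x = ⟨f (H_p - ⟨H_p⟩_x)⟩_x`. Consequently the mean absolute difference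
`D(x) = E⟨|H_p(σ¹) - H_p(σ²)|⟩_x` satisfies `|D'(x)| ≤ 2 V(x)` with
`V(x) = E⟨(H_p - ⟨H_p⟩_x)²⟩_x`, while `|t| ≤ ε/2 + t²/(2ε)` gives
`D(x) ≤ ε/2 + V(x)/ε`.
At a minimiser `x₀` of `V` on `[β_p, β_p']` one has `δ V(x₀) ≤ N Δ_N`, and
`D(β_p) ≤ D(x₀) + 2 N Δ_N`; optimising in `ε` gives the second inequality.
The first one is Jensen's inequality, since `H_p(σ¹) - ⟨H_p⟩ = ⟨H_p(σ¹) - H_p(σ²)⟩`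
over `σ²`.
-/

open Finset

section WeightedAverage

variable {S : Type*} [Fintype S]

def wmean (w f : S → ℝ) : ℝ := ∑ σ, w σ * f σ

def wvar (w f : S → ℝ) : ℝ := wmean w fun σ => (f σ - wmean w f) ^ 2

def meanAbsDiff (w f : S → ℝ) : ℝ := ∑ σ, ∑ τ, w σ * w τ * |f σ - f τ|

def meanAbsDiffDeriv (w f : S → ℝ) : ℝ :=
  ∑ σ, ∑ τ, w σ * w τ * ((f σ - wmean w f + (f τ - wmean w f)) * |f σ - f τ|)

variable {w : S → ℝ}

lemma wmean_le_of_le (hw0 : ∀ σ, 0 ≤ w σ) (hw1 : ∑ σ, w σ = 1) {f : S → ℝ} {c : ℝ}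
    (hf : ∀ σ, f σ ≤ c) : wmean w f ≤ c :=
  calc wmean w f ≤ ∑ σ, w σ * c :=
        sum_le_sum fun σ _ => mul_le_mul_of_nonneg_left (hf σ) (hw0 σ)
    _ = c := by rw [← sum_mul, hw1, one_mul]

lemma wmean_nonneg (hw0 : ∀ σ, 0 ≤ w σ) {f : S → ℝ} (hf : ∀ σ, 0 ≤ f σ) :
    0 ≤ wmean w f :=
  sum_nonneg fun σ _ => mul_nonneg (hw0 σ) (hf σ)

lemma wmean_sub_wmean_eq_zero (hw1 : ∑ σ, w σ = 1) (f : S → ℝ) :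
    wmean w (fun σ => f σ - wmean w f) = 0 := by
  simp only [wmean, mul_sub, sum_sub_distrib, ← sum_mul, hw1, one_mul, sub_self]

lemma wvar_nonneg (hw0 : ∀ σ, 0 ≤ w σ) (f : S → ℝ) : 0 ≤ wvar w f :=
  wmean_nonneg hw0 fun _ => sq_nonneg _

lemma meanAbsDiff_nonneg (hw0 : ∀ σ, 0 ≤ w σ) (f : S → ℝ) : 0 ≤ meanAbsDiff w f :=
  sum_nonneg fun σ _ => sum_nonneg fun τ _ =>
    mul_nonneg (mul_nonneg (hw0 σ) (hw0 τ)) (abs_nonneg _)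

lemma wvar_le_wmean_sq (hw1 : ∑ σ, w σ = 1) (f : S → ℝ) :
    wvar w f ≤ wmean w fun σ => f σ ^ 2 := by
  have hvar : wvar w f = (wmean w fun σ => f σ ^ 2) - wmean w f ^ 2 := by
    have hcross : ∑ σ, w σ * (2 * f σ * wmean w f) = 2 * wmean w f * wmean w f := by
      rw [wmean, mul_sum]; exact sum_congr rfl fun _ _ => by ring
    simp only [wvar, wmean, sub_sq, mul_add, mul_sub, sum_add_distrib, sum_sub_distrib, ← sum_mul,
      hw1] at hcross ⊢
    rw [hcross]; ring
  rw [hvar]; linarith [sq_nonneg (wmean w f)]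

lemma sum_sum_mul_add_eq_two_mul_wmean (hw1 : ∑ σ, w σ = 1) (u : S → ℝ) :
    ∑ σ, ∑ τ, w σ * w τ * (u σ + u τ) = 2 * wmean w u := by
  simp only [mul_add, sum_add_distrib, mul_assoc, ← mul_sum, ← sum_mul, hw1, one_mul, wmean]
  ring

lemma sum_sum_mul_sub_sq_eq_two_mul_wvar (hw1 : ∑ σ, w σ = 1) (f : S → ℝ) :
    ∑ σ, ∑ τ, w σ * w τ * (f σ - f τ) ^ 2 = 2 * wvar w f := by
  set a : S → ℝ := fun σ => f σ - wmean w f with ha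
  have hcentered : ∑ σ, w σ * a σ = 0 := wmean_sub_wmean_eq_zero hw1 f
  calc ∑ σ, ∑ τ, w σ * w τ * (f σ - f τ) ^ 2
      = ∑ σ, ∑ τ, (w σ * w τ * (a σ ^ 2 + a τ ^ 2) - 2 * (w σ * a σ * (w τ * a τ))) :=
        sum_congr rfl fun σ _ => sum_congr rfl fun τ _ => by rw [ha]; ring
    _ = 2 * wvar w f := by
        simp only [sum_sub_distrib, ← mul_sum, hcentered, sum_sum_mul_add_eq_two_mul_wmean hw1,
          mul_zero, sub_zero]
        rfl

lemma wmean_abs_sub_le_meanAbsDiff (hw0 : ∀ σ, 0 ≤ w σ) (hw1 : ∑ σ, w σ = 1)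
    (f : S → ℝ) : (wmean w fun σ => |f σ - wmean w f|) ≤ meanAbsDiff w f := by
  refine sum_le_sum fun σ _ => ?_
  have hdev : f σ - wmean w f = ∑ τ, w τ * (f σ - f τ) := by
    simp only [wmean, mul_sub, sum_sub_distrib, ← sum_mul, hw1, one_mul]
  calc w σ * |f σ - wmean w f| ≤ w σ * ∑ τ, w τ * |f σ - f τ| := by
        refine mul_le_mul_of_nonneg_left ?_ (hw0 σ)
        rw [hdev]
        refine (abs_sum_le_sum_abs _ _).trans_eq (sum_congr rfl fun τ _ => ?_)
        rw [abs_mul, abs_of_nonneg (hw0 τ)]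
    _ = ∑ τ, w σ * w τ * |f σ - f τ| := by simp only [mul_sum, mul_assoc]

lemma meanAbsDiff_le (hw0 : ∀ σ, 0 ≤ w σ) (hw1 : ∑ σ, w σ = 1) (f : S → ℝ) {ε : ℝ}
    (hε : 0 < ε) : meanAbsDiff w f ≤ ε / 2 + wvar w f / ε := by
  have hamgm : ∀ t : ℝ, |t| ≤ ε / 2 + t ^ 2 / (2 * ε) := fun t => by
    rw [div_add_div _ _ two_ne_zero (by positivity), le_div_iff₀ (by positivity)]
    nlinarith [sq_nonneg (|t| - ε), sq_abs t]
  have hone : ∑ σ, ∑ τ, w σ * w τ = 1 := by rw [← sum_mul_sum, hw1, one_mul]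
  calc meanAbsDiff w f
      ≤ ∑ σ, ∑ τ, w σ * w τ * (ε / 2 + (f σ - f τ) ^ 2 / (2 * ε)) :=
        sum_le_sum fun σ _ => sum_le_sum fun τ _ =>
          mul_le_mul_of_nonneg_left (hamgm _) (mul_nonneg (hw0 σ) (hw0 τ))
    _ = (∑ σ, ∑ τ, w σ * w τ) * (ε / 2) +
          (∑ σ, ∑ τ, w σ * w τ * (f σ - f τ) ^ 2) / (2 * ε) := by
        simp only [mul_add, sum_add_distrib, sum_mul, sum_div, mul_div_assoc]
    _ = ε / 2 + wvar w f / ε := by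
        rw [hone, sum_sum_mul_sub_sq_eq_two_mul_wvar hw1]; field_simp

lemma abs_meanAbsDiffDeriv_le (hw0 : ∀ σ, 0 ≤ w σ) (hw1 : ∑ σ, w σ = 1) (f : S → ℝ) :
    |meanAbsDiffDeriv w f| ≤ 2 * wvar w f := by
  have hpt : ∀ a b : ℝ, |(a + b) * (|a - b|)| ≤ a ^ 2 + b ^ 2 := fun a b => by
    rw [abs_mul, abs_abs, ← abs_mul, show (a + b) * (a - b) = a ^ 2 - b ^ 2 by ring]
    exact abs_le.2 ⟨by nlinarith [sq_nonneg a], by nlinarith [sq_nonneg b]⟩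
  calc |meanAbsDiffDeriv w f|
      ≤ ∑ σ, ∑ τ, w σ * w τ * ((f σ - wmean w f) ^ 2 + (f τ - wmean w f) ^ 2) := by
        refine (abs_sum_le_sum_abs _ _).trans (sum_le_sum fun σ _ => ?_)
        refine (abs_sum_le_sum_abs _ _).trans (sum_le_sum fun τ _ => ?_)
        rw [abs_mul, abs_of_nonneg (mul_nonneg (hw0 σ) (hw0 τ)),
          ← sub_sub_sub_cancel_right (f σ) (f τ) (wmean w f)]
        exact mul_le_mul_of_nonneg_left (hpt _ _) (mul_nonneg (hw0 σ) (hw0 τ))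
    _ = 2 * wvar w f := sum_sum_mul_add_eq_two_mul_wmean hw1 _

end WeightedAverage

lemma le_sqrt_two_mul_of_forall_le {X c : ℝ} (hc : 0 ≤ c)
    (h : ∀ ε > 0, X ≤ ε / 2 + c / ε) : X ≤ √(2 * c) := by
  rcases hc.eq_or_lt with rfl | hc
  · refine le_of_forall_pos_le_add fun ε hε => ?_
    simpa using h (2 * ε) (by positivity)
  · have hs : 0 < √(2 * c) := by positivity
    have hs2 : √(2 * c) ^ 2 = 2 * c := Real.sq_sqrt (by positivity)
    refine (h _ hs).trans_eq ?_
    field_simp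
    linarith

lemma inv_mul_sqrt_add_le {K I δ : ℝ} (hK : 0 < K) (hI : 0 ≤ I) (hδ : 0 < δ) :
    K⁻¹ * (√(2 * (I / δ)) + 2 * I) ≤ 2 * √(K⁻¹ * I / (K * δ)) + 8 * (K⁻¹ * I) := by
  have hroot : K⁻¹ * √(2 * (I / δ)) ≤ 2 * √(K⁻¹ * I / (K * δ)) := by
    rw [← pow_le_pow_iff_left₀ (by positivity) (by positivity) two_ne_zero, mul_pow, mul_pow,
      Real.sq_sqrt (by positivity), Real.sq_sqrt (by positivity)]
    field_simp
    nlinarith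
  have hlin : K⁻¹ * (2 * I) ≤ 8 * (K⁻¹ * I) := by nlinarith [inv_nonneg.2 hK.le]
  linarith [mul_add K⁻¹ (√(2 * (I / δ))) (2 * I)]

noncomputable section TiltedGibbs

variable {Ω S : Type*} [Fintype S]

def tiltGibbs (H C : S → Ω → ℝ) (x : ℝ) (ω : Ω) (σ : S) : ℝ :=
  Real.exp (x * H σ ω + C σ ω) / ∑ τ, Real.exp (x * H τ ω + C τ ω)

variable {H C : S → Ω → ℝ}

lemma tiltGibbs_nonneg (x : ℝ) (ω : Ω) (σ : S) : 0 ≤ tiltGibbs H C x ω σ := by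
  unfold tiltGibbs; positivity

lemma sum_tiltGibbs [Nonempty S] (x : ℝ) (ω : Ω) : ∑ σ, tiltGibbs H C x ω σ = 1 := by
  have hZ : 0 < ∑ τ, Real.exp (x * H τ ω + C τ ω) := by positivity
  simp only [tiltGibbs, ← sum_div, div_self hZ.ne']

lemma hasDerivAt_tiltGibbs [Nonempty S] (x : ℝ) (ω : Ω) (σ : S) :
    HasDerivAt (fun y => tiltGibbs H C y ω σ)
      (tiltGibbs H C x ω σ * (H σ ω - wmean (tiltGibbs H C x ω) (H · ω))) x := by
  set e : S → ℝ := fun τ => Real.exp (x * H τ ω + C τ ω)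
  have he : ∀ τ, HasDerivAt (fun y => Real.exp (y * H τ ω + C τ ω)) (e τ * H τ ω) x :=
    fun τ => (((hasDerivAt_id x).mul_const (H τ ω)).add_const (C τ ω)).exp.congr_deriv
      (by simp [e])
  have hZ : 0 < ∑ τ, e τ := by positivity
  have hm : wmean (tiltGibbs H C x ω) (H · ω) = (∑ τ, e τ * H τ ω) / ∑ τ, e τ := by
    simp only [wmean, tiltGibbs, sum_div, div_mul_eq_mul_div, e]
  refine ((he σ).div (HasDerivAt.fun_sum fun τ _ => he τ) hZ.ne').congr_deriv ?_
  rw [hm]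
  simp only [tiltGibbs, e]
  field_simp

lemma continuous_tiltGibbs [Nonempty S] (ω : Ω) (σ : S) :
    Continuous fun x => tiltGibbs H C x ω σ :=
  continuous_iff_continuousAt.2 fun x => (hasDerivAt_tiltGibbs x ω σ).continuousAt

lemma continuous_wvar_tiltGibbs [Nonempty S] (ω : Ω) :
    Continuous fun x => wvar (tiltGibbs H C x ω) (H · ω) := by
  have := fun σ => continuous_tiltGibbs (H := H) (C := C) ω σ
  unfold wvar wmean
  fun_prop

lemma hasDerivAt_meanAbsDiff_tiltGibbs [Nonempty S] (x : ℝ) (ω : Ω) :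
    HasDerivAt (fun y => meanAbsDiff (tiltGibbs H C y ω) (H · ω))
      (meanAbsDiffDeriv (tiltGibbs H C x ω) (H · ω)) x := by
  unfold meanAbsDiff
  refine (HasDerivAt.fun_sum fun σ _ => HasDerivAt.fun_sum fun τ _ =>
    ((hasDerivAt_tiltGibbs (H := H) (C := C) x ω σ).mul
      (hasDerivAt_tiltGibbs x ω τ)).mul_const |H σ ω - H τ ω|).congr_deriv ?_
  exact sum_congr rfl fun σ _ => sum_congr rfl fun τ _ => by ring

lemma wvar_tiltGibbs_le_sum_sq [Nonempty S] (x : ℝ) (ω : Ω) :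
    wvar (tiltGibbs H C x ω) (H · ω) ≤ ∑ σ, H σ ω ^ 2 :=
  (wvar_le_wmean_sq (sum_tiltGibbs x ω) _).trans <|
    wmean_le_of_le (tiltGibbs_nonneg x ω) (sum_tiltGibbs x ω) fun σ =>
      single_le_sum (f := fun τ => H τ ω ^ 2) (fun _ _ => sq_nonneg _) (mem_univ σ)

variable [MeasurableSpace Ω] (hH : ∀ σ, Measurable (H σ)) (hC : ∀ σ, Measurable (C σ))
include hH hC

lemma measurable_tiltGibbs (x : ℝ) (σ : S) : Measurable fun ω => tiltGibbs H C x ω σ := by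
  unfold tiltGibbs; fun_prop

lemma measurable_wvar_tiltGibbs (x : ℝ) :
    Measurable fun ω => wvar (tiltGibbs H C x ω) (H · ω) := by
  have := fun σ => measurable_tiltGibbs hH hC x σ
  unfold wvar wmean; fun_prop

lemma measurable_meanAbsDiff_tiltGibbs (x : ℝ) :
    Measurable fun ω => meanAbsDiff (tiltGibbs H C x ω) (H · ω) := by
  have := fun σ => measurable_tiltGibbs hH hC x σ
  unfold meanAbsDiff; fun_prop

lemma measurable_meanAbsDiffDeriv_tiltGibbs (x : ℝ) :
    Measurable fun ω => meanAbsDiffDeriv (tiltGibbs H C x ω) (H · ω) := by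
  have := fun σ => measurable_tiltGibbs hH hC x σ
  unfold meanAbsDiffDeriv wmean; fun_prop

end TiltedGibbs

section Expectation

variable {Ω S : Type*} [MeasurableSpace Ω] [Fintype S] [Nonempty S] {H C : S → Ω → ℝ}
variable {μ : Measure Ω} (hH : ∀ σ, Measurable (H σ)) (hC : ∀ σ, Measurable (C σ))
  (hH2 : ∀ σ, Integrable (fun ω => H σ ω ^ 2) μ)
include hH hC hH2

lemma continuous_integral_wvar_tiltGibbs :
    Continuous fun x => ∫ ω, wvar (tiltGibbs H C x ω) (H · ω) ∂μ :=
  continuous_of_dominated (fun x => (measurable_wvar_tiltGibbs hH hC x).aestronglyMeasurable)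
    (fun x => ae_of_all _ fun ω => by
      rw [Real.norm_of_nonneg (wvar_nonneg (tiltGibbs_nonneg x ω) _)]
      exact wvar_tiltGibbs_le_sum_sq x ω)
    (integrable_finsetSum univ fun σ _ => hH2 σ)
    (ae_of_all _ fun ω => continuous_wvar_tiltGibbs ω)

lemma integrable_wvar_tiltGibbs (x : ℝ) :
    Integrable (fun ω => wvar (tiltGibbs H C x ω) (H · ω)) μ := by
  refine (integrable_finsetSum univ fun σ _ => hH2 σ).mono'
    (measurable_wvar_tiltGibbs hH hC x).aestronglyMeasurable (ae_of_all _ fun ω => ?_)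
  rw [Real.norm_of_nonneg (wvar_nonneg (tiltGibbs_nonneg x ω) _)]
  exact wvar_tiltGibbs_le_sum_sq x ω

lemma integrable_meanAbsDiffDeriv_tiltGibbs (x : ℝ) :
    Integrable (fun ω => meanAbsDiffDeriv (tiltGibbs H C x ω) (H · ω)) μ :=
  ((integrable_finsetSum univ fun σ _ => hH2 σ).const_mul 2).mono'
    (measurable_meanAbsDiffDeriv_tiltGibbs hH hC x).aestronglyMeasurable
    (ae_of_all _ fun ω =>
      (abs_meanAbsDiffDeriv_le (tiltGibbs_nonneg x ω) (sum_tiltGibbs x ω) _).trans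
        (by linarith [wvar_tiltGibbs_le_sum_sq (H := H) (C := C) x ω]))

variable [IsProbabilityMeasure μ]

lemma integrable_meanAbsDiff_tiltGibbs (x : ℝ) :
    Integrable (fun ω => meanAbsDiff (tiltGibbs H C x ω) (H · ω)) μ := by
  refine ((integrable_const (1 / 2 : ℝ)).add (integrable_wvar_tiltGibbs hH hC hH2 x)).mono'
    (measurable_meanAbsDiff_tiltGibbs hH hC x).aestronglyMeasurable (ae_of_all _ fun ω => ?_)
  rw [Real.norm_of_nonneg (meanAbsDiff_nonneg (tiltGibbs_nonneg x ω) _)]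
  simpa using meanAbsDiff_le (tiltGibbs_nonneg x ω) (sum_tiltGibbs x ω) (H · ω) one_pos

lemma integral_meanAbsDiff_tiltGibbs_le (x : ℝ) {ε : ℝ} (hε : 0 < ε) :
    ∫ ω, meanAbsDiff (tiltGibbs H C x ω) (H · ω) ∂μ ≤
      ε / 2 + (∫ ω, wvar (tiltGibbs H C x ω) (H · ω) ∂μ) / ε := by
  have hV := integrable_wvar_tiltGibbs hH hC hH2 x
  calc ∫ ω, meanAbsDiff (tiltGibbs H C x ω) (H · ω) ∂μ
      ≤ ∫ ω, (ε / 2 + wvar (tiltGibbs H C x ω) (H · ω) / ε) ∂μ :=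
        integral_mono (integrable_meanAbsDiff_tiltGibbs hH hC hH2 x)
          ((integrable_const _).add (hV.div_const ε)) fun ω =>
          meanAbsDiff_le (tiltGibbs_nonneg x ω) (sum_tiltGibbs x ω) _ hε
    _ = ε / 2 + (∫ ω, wvar (tiltGibbs H C x ω) (H · ω) ∂μ) / ε := by
        rw [integral_add (integrable_const _) (hV.div_const ε), integral_const, integral_div]
        simp

lemma hasDerivAt_integral_meanAbsDiff_tiltGibbs (x : ℝ) :
    HasDerivAt (fun y => ∫ ω, meanAbsDiff (tiltGibbs H C y ω) (H · ω) ∂μ)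
      (∫ ω, meanAbsDiffDeriv (tiltGibbs H C x ω) (H · ω) ∂μ) x :=
  (hasDerivAt_integral_of_dominated_loc_of_deriv_le (bound := fun ω => 2 * ∑ σ, H σ ω ^ 2)
    univ_mem
    (Eventually.of_forall fun y =>
      (measurable_meanAbsDiff_tiltGibbs hH hC y).aestronglyMeasurable)
    (integrable_meanAbsDiff_tiltGibbs hH hC hH2 x)
    (measurable_meanAbsDiffDeriv_tiltGibbs hH hC x).aestronglyMeasurable
    (ae_of_all _ fun ω y _ =>
      (abs_meanAbsDiffDeriv_le (tiltGibbs_nonneg y ω) (sum_tiltGibbs y ω) _).trans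
        (by linarith [wvar_tiltGibbs_le_sum_sq (H := H) (C := C) y ω]))
    ((integrable_finsetSum univ fun σ _ => hH2 σ).const_mul 2)
    (ae_of_all _ fun ω y _ => hasDerivAt_meanAbsDiff_tiltGibbs y ω)).2

lemma integral_meanAbsDiff_tiltGibbs_le_add {a c : ℝ} (hac : a ≤ c) :
    ∫ ω, meanAbsDiff (tiltGibbs H C a ω) (H · ω) ∂μ ≤
      ∫ ω, meanAbsDiff (tiltGibbs H C c ω) (H · ω) ∂μ +
        2 * ∫ x in a..c, ∫ ω, wvar (tiltGibbs H C x ω) (H · ω) ∂μ := by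
  have hV := continuous_integral_wvar_tiltGibbs hH hC hH2 (μ := μ)
  have hderiv_ge (y : ℝ) : -(2 * ∫ ω, wvar (tiltGibbs H C y ω) (H · ω) ∂μ) ≤
      ∫ ω, meanAbsDiffDeriv (tiltGibbs H C y ω) (H · ω) ∂μ := by
    refine neg_le_of_abs_le ((abs_integral_le_integral_abs).trans ?_)
    rw [← integral_const_mul]
    exact integral_mono (integrable_meanAbsDiffDeriv_tiltGibbs hH hC hH2 y).abs
      ((integrable_wvar_tiltGibbs hH hC hH2 y).const_mul 2)
      fun ω => abs_meanAbsDiffDeriv_le (tiltGibbs_nonneg y ω) (sum_tiltGibbs y ω) _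
  have hmono := monotone_of_hasDerivAt_nonneg (fun y =>
    (hasDerivAt_integral_meanAbsDiff_tiltGibbs hH hC hH2 y).add
      ((hV.integral_hasStrictDerivAt a y).hasDerivAt.const_mul 2))
    fun y => by simp only [Pi.zero_apply]; linarith [hderiv_ge y]
  simpa using hmono hac

theorem integral_meanAbsDiff_tiltGibbs_le_sqrt {a b : ℝ} (hab : a < b) :
    ∫ ω, meanAbsDiff (tiltGibbs H C a ω) (H · ω) ∂μ ≤
      √(2 * ((∫ x in a..b, ∫ ω, wvar (tiltGibbs H C x ω) (H · ω) ∂μ) / (b - a))) +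
        2 * ∫ x in a..b, ∫ ω, wvar (tiltGibbs H C x ω) (H · ω) ∂μ := by
  set V := fun x => ∫ ω, wvar (tiltGibbs H C x ω) (H · ω) ∂μ
  set I := ∫ x in a..b, V x
  have hV : Continuous V := continuous_integral_wvar_tiltGibbs hH hC hH2
  have hV0 (x : ℝ) : 0 ≤ V x := integral_nonneg fun ω => wvar_nonneg (tiltGibbs_nonneg x ω) _
  obtain ⟨x₀, ⟨hax₀, hx₀b⟩, hmin⟩ :=
    isCompact_Icc.exists_isMinOn (Set.nonempty_Icc.2 hab.le) hV.continuousOn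
  have hVx₀ : V x₀ ≤ I / (b - a) := by
    have h : ∫ _ in a..b, V x₀ ≤ I := intervalIntegral.integral_mono_on hab.le
      intervalIntegrable_const (hV.intervalIntegrable a b) fun x hx => hmin hx
    rw [le_div_iff₀ (sub_pos.2 hab)]
    simpa [mul_comm] using h
  have hsub : ∫ x in a..x₀, V x ≤ I := intervalIntegral.integral_mono_interval le_rfl hax₀
    hx₀b (ae_of_all _ hV0) (hV.intervalIntegrable a b)
  have hI0 : 0 ≤ I := intervalIntegral.integral_nonneg hab.le fun x _ => hV0 x
  have htransport := integral_meanAbsDiff_tiltGibbs_le_add hH hC hH2 (μ := μ) hax₀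
  suffices h : ∫ ω, meanAbsDiff (tiltGibbs H C a ω) (H · ω) ∂μ - 2 * I ≤
      √(2 * (I / (b - a))) by linarith
  refine le_sqrt_two_mul_of_forall_le (div_nonneg hI0 (sub_pos.2 hab).le) fun ε hε => ?_
  have hD₀ := integral_meanAbsDiff_tiltGibbs_le hH hC hH2 (μ := μ) x₀ hε
  have hdiv := div_le_div_of_nonneg_right hVx₀ hε.le
  linarith

end Expectation

section SpinGlass

variable {Ω : Type*} {N : ℕ}

lemma gibbsAvg_one (β : ℕ → ℝ) (h : ℝ) (g : (q : ℕ) → (Fin q → Fin N) → Ω → ℝ)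
    (f : (Fin 1 → Config N) → Ω → ℝ) (ω : Ω) :
    gibbsAvg N β h g 1 f ω = ∑ σ, gibbs N β h g σ ω * f (fun _ => σ) ω := by
  rw [gibbsAvg, ← (Equiv.funUnique (Fin 1) (Config N)).symm.sum_comp]
  have hconst (σ : Config N) : (uniqueElim σ : Fin 1 → Config N) = fun _ => σ :=
    funext (uniqueElim_const σ)
  simp [hconst, mul_comm]

lemma gibbsAvg_two (β : ℕ → ℝ) (h : ℝ) (g : (q : ℕ) → (Fin q → Fin N) → Ω → ℝ)
    (f : (Fin 2 → Config N) → Ω → ℝ) (ω : Ω) :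
    gibbsAvg N β h g 2 f ω =
      ∑ σ, ∑ τ, gibbs N β h g σ ω * gibbs N β h g τ ω * f ![σ, τ] ω := by
  rw [gibbsAvg, ← (piFinTwoEquiv fun _ => Config N).symm.sum_comp, Fintype.sum_prod_type]
  simp [mul_comm]

lemma weight_update {β : ℕ → ℝ} (hβ : (Function.support β).Finite) (p : ℕ) (x h : ℝ)
    (g : (q : ℕ) → (Fin q → Fin N) → Ω → ℝ) (σ : Config N) (ω : Ω) :
    weight N (Function.update β p x) h g σ ω =
      Real.exp (x * Hp N p (g p) σ ω +
        (∑ q ∈ hβ.toFinset.erase p, β q * Hp N q (g q) σ ω + h * ∑ i, spin (σ i))) := by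
  have hsupp : Function.support (fun q => Function.update β p x q * Hp N q (g q) σ ω) ⊆
      ↑(insert p hβ.toFinset) := fun q hq => by
    by_cases hqp : q = p
    · simp [hqp]
    · simp only [Function.mem_support, Function.update_of_ne hqp] at hq
      simp [left_ne_zero_of_mul hq]
  rw [weight, finsum_eq_sum_of_support_subset _ hsupp,
    ← add_sum_erase _ _ (mem_insert_self p _), erase_insert_eq_erase, Function.update_self,
    add_assoc]
  congr 3
  exact sum_congr rfl fun q hq => by rw [Function.update_of_ne (ne_of_mem_erase hq)]

lemma gibbs_update_eq_tiltGibbs {β : ℕ → ℝ} (hβ : (Function.support β).Finite) (p : ℕ)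
    (x h : ℝ) (g : (q : ℕ) → (Fin q → Fin N) → Ω → ℝ) (σ : Config N) (ω : Ω) :
    gibbs N (Function.update β p x) h g σ ω =
      tiltGibbs (Hp N p (g p))
        (fun σ ω =>
          ∑ q ∈ hβ.toFinset.erase p, β q * Hp N q (g q) σ ω + h * ∑ i, spin (σ i))
        x ω σ := by
  simp only [gibbs, Zpart, weight_update hβ, tiltGibbs]

variable [MeasurableSpace Ω] {p : ℕ} {gp : (Fin p → Fin N) → Ω → ℝ}

lemma measurable_Hp (hgp : ∀ i, Measurable (gp i)) (σ : Config N) :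
    Measurable (Hp N p gp σ) := by
  unfold Hp; fun_prop

lemma memLp_two_Hp {μ : Measure Ω} (hgp : ∀ i, Measurable (gp i))
    (hlaw : ∀ i, μ.map (gp i) = gaussianReal 0 1) (σ : Config N) :
    MemLp (Hp N p gp σ) 2 μ := by
  have hL2 (i : Fin p → Fin N) : MemLp (gp i) 2 μ :=
    (memLp_map_measure_iff aestronglyMeasurable_id (hgp i).aemeasurable).1
      (hlaw i ▸ memLp_id_gaussianReal 2)
  exact (memLp_finsetSum univ fun i _ => (hL2 i).mul_const _).const_mul _

end SpinGlass

theorem statement5_general {Ω : Type*} [MeasurableSpace Ω] (μ : Measure Ω) [IsProbabilityMeasure μ]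
    (p : ℕ) (β : ℕ → ℝ) (hβ : (Function.support β).Finite) (h : ℝ)
    (N : ℕ) (hN : 1 ≤ N)
    (g : (q : ℕ) → (Fin q → Fin N) → Ω → ℝ)
    (hg : IsGaussianDisorder N g μ)
    (βp' : ℝ) (hβp' : β p < βp') (δ : ℝ) (hδ : δ = βp' - β p)
    (Δ : ℝ)
    (hΔ : Δ = (N : ℝ)⁻¹ * ∫ x in (β p)..βp',
      (∫ ω, gibbsAvg N (Function.update β p x) h g 1
        (fun σs ω' => (Hp N p (g p) (σs 0) ω' -
          gibbsAvg N (Function.update β p x) h g 1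
            (fun τs ω'' => Hp N p (g p) (τs 0) ω'') ω') ^ 2) ω ∂μ)) :
    (N : ℝ)⁻¹ * (∫ ω, gibbsAvg N β h g 1
        (fun σs ω' => |Hp N p (g p) (σs 0) ω' -
          gibbsAvg N β h g 1 (fun τs ω'' => Hp N p (g p) (τs 0) ω'') ω'|) ω ∂μ) ≤
      (N : ℝ)⁻¹ * (∫ ω, gibbsAvg N β h g 2
        (fun σs ω' => |Hp N p (g p) (σs 0) ω' - Hp N p (g p) (σs 1) ω'|) ω ∂μ) ∧
    (N : ℝ)⁻¹ * (∫ ω, gibbsAvg N β h g 2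
        (fun σs ω' => |Hp N p (g p) (σs 0) ω' - Hp N p (g p) (σs 1) ω'|) ω ∂μ) ≤
      2 * Real.sqrt (Δ / (N * δ)) + 8 * Δ := by
  obtain ⟨hgm, hglaw, -⟩ := hg
  set H : Config N → Ω → ℝ := Hp N p (g p)
  set C : Config N → Ω → ℝ := fun σ ω =>
    ∑ q ∈ hβ.toFinset.erase p, β q * Hp N q (g q) σ ω + h * ∑ i, spin (σ i)
  have hG (x : ℝ) (σ : Config N) (ω : Ω) :
      gibbs N (Function.update β p x) h g σ ω = tiltGibbs H C x ω σ :=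
    gibbs_update_eq_tiltGibbs hβ p x h g σ ω
  have hG₀ (σ : Config N) (ω : Ω) : gibbs N β h g σ ω = tiltGibbs H C (β p) ω σ := by
    simpa using hG (β p) σ ω
  have hH (σ : Config N) : Measurable (H σ) := measurable_Hp (hgm p) σ
  have hC (σ : Config N) : Measurable (C σ) := by
    have := fun q => measurable_Hp (hgm q) σ
    fun_prop
  have hH2 (σ : Config N) : Integrable (fun ω => H σ ω ^ 2) μ :=
    (memLp_two_Hp (hgm p) (hglaw p) σ).integrable_sq
  have hN₀ : (0 : ℝ) < N := by exact_mod_cast hN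
  subst hδ hΔ
  simp only [gibbsAvg_one, gibbsAvg_two, hG, hG₀, Matrix.cons_val_zero, Matrix.cons_val_one]
  refine ⟨mul_le_mul_of_nonneg_left ?_ (inv_nonneg.2 hN₀.le), ?_⟩
  · exact integral_mono_of_nonneg
      (ae_of_all _ fun ω => wmean_nonneg (tiltGibbs_nonneg _ ω) fun _ => abs_nonneg _)
      (integrable_meanAbsDiff_tiltGibbs hH hC hH2 _)
      (ae_of_all _ fun ω =>
        wmean_abs_sub_le_meanAbsDiff (tiltGibbs_nonneg _ ω) (sum_tiltGibbs _ ω) _)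
  · exact (mul_le_mul_of_nonneg_left (integral_meanAbsDiff_tiltGibbs_le_sqrt hH hC hH2 hβp')
      (inv_nonneg.2 hN₀.le)).trans (inv_mul_sqrt_add_le hN₀
        (intervalIntegral.integral_nonneg hβp'.le fun x _ =>
          integral_nonneg fun ω => wvar_nonneg (tiltGibbs_nonneg x ω) _) (sub_pos.2 hβp'))

/-- With `δ = β_p' − β_p > 0` and
`Δ_N = N⁻¹ ∫_{β_p}^{β_p'} E⟨(H_p(σ) − ⟨H_p(σ)⟩_x)²⟩_x dx`, one has
`N⁻¹ E⟨|H_p(σ) − ⟨H_p(σ)⟩|⟩ ≤ N⁻¹ E⟨|H_p(σ¹) − H_p(σ²)|⟩ ≤ 2√(Δ_N/(Nδ)) + 8Δ_N`,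
where the unsubscripted averages are at the original parameter `β_p`. -/
theorem statement5 {Ω : Type*} [MeasurableSpace Ω] (μ : Measure Ω) [IsProbabilityMeasure μ]
    (p : ℕ) (hp : 1 ≤ p) (β : ℕ → ℝ) (hβ : (Function.support β).Finite) (h : ℝ)
    (N : ℕ) (hN : 1 ≤ N)
    (g : (q : ℕ) → (Fin q → Fin N) → Ω → ℝ)
    (hg : IsGaussianDisorder N g μ)
    (βp' : ℝ) (hβp' : β p < βp') (δ : ℝ) (hδ : δ = βp' - β p)
    (Δ : ℝ)
    (hΔ : Δ = (N : ℝ)⁻¹ * ∫ x in (β p)..βp',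
      (∫ ω, gibbsAvg N (Function.update β p x) h g 1
        (fun σs ω' => (Hp N p (g p) (σs 0) ω' -
          gibbsAvg N (Function.update β p x) h g 1
            (fun τs ω'' => Hp N p (g p) (τs 0) ω'') ω') ^ 2) ω ∂μ)) :
    (N : ℝ)⁻¹ * (∫ ω, gibbsAvg N β h g 1
        (fun σs ω' => |Hp N p (g p) (σs 0) ω' -
          gibbsAvg N β h g 1 (fun τs ω'' => Hp N p (g p) (τs 0) ω'') ω'|) ω ∂μ) ≤
      (N : ℝ)⁻¹ * (∫ ω, gibbsAvg N β h g 2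
        (fun σs ω' => |Hp N p (g p) (σs 0) ω' - Hp N p (g p) (σs 1) ω'|) ω ∂μ) ∧
    (N : ℝ)⁻¹ * (∫ ω, gibbsAvg N β h g 2
        (fun σs ω' => |Hp N p (g p) (σs 0) ω' - Hp N p (g p) (σs 1) ω'|) ω ∂μ) ≤
      2 * Real.sqrt (Δ / (N * δ)) + 8 * Δ :=
  statement5_general μ p β hβ h N hN g hg βp' hβp' δ hδ Δ hΔ
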